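/- The 12-tile clause component for clause c = (i ∨ j ∨ k) admits a proper vertical arrangement consistent with its three incoming horizontal wire signals if and only if exactly one of the three incoming signals has the 'true' polarity. -/
import Mathlib


/-- Edge labels: integers plus the special boundary markers `top`, `left`, `right`. -/
inductive Lab where
  | num : ℤ → Lab
  | top : Lab
  | left : Lab
  | right : Lab
deriving DecidableEq

/-- A Tetravex tile: labels on its top, right, bottom and left edges. -/
structure Tile where
  top : Lab
  right : Lab
  bottom : Lab
  left : Lab
deriving DecidableEq

/-- A placement on an `h × w` board (first index = row, second = column) is proper
if horizontally adjacent tiles agree on the shared vertical edge and vertically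
adjacent tiles agree on the shared horizontal edge. -/
def IsProper (h w : ℕ) (p : Fin h → Fin w → Tile) : Prop :=
  (∀ (i : Fin h) (j j' : Fin w), (j' : ℕ) = (j : ℕ) + 1 → (p i j).right = (p i j').left) ∧
  (∀ (i i' : Fin h) (j : Fin w), (i' : ℕ) = (i : ℕ) + 1 → (p i j).bottom = (p i' j).top)

/-- The multiset of tiles used by a placement. -/
def TilesOf (h w : ℕ) (p : Fin h → Fin w → Tile) : Multiset Tile :=
  (Finset.univ : Finset (Fin h × Fin w)).val.map fun q => p q.1 q.2

/-- A multiset of tiles admits a proper tiling of an `h × w` board. -/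
def Tileable (h w : ℕ) (T : Multiset Tile) : Prop :=
  ∃ p : Fin h → Fin w → Tile, TilesOf h w p = T ∧ IsProper h w p

/-- The `t`-th tile (from the top, `0 ≤ t ≤ 11`) of the clause component with
clause label `C` and variable labels `x0, x1, x2` (fields are
(top, right, bottom, left)), in the arrangement where the slot-0 variable is
the true one; as a multiset the 12 tiles do not depend on this choice. -/
def clauseTile (C x0 x1 x2 : ℤ) (t : ℕ) : Tile :=
  match t with
  | 0 => ⟨.num 0, .num 0, .num (-C), .left⟩
  | 1 => ⟨.num (-C), .num 0, .num C, .left⟩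
  | 2 => ⟨.num C, .num x0, .num (-C), .left⟩
  | 3 => ⟨.num (-C), .num (-x0), .num C, .left⟩
  | 4 => ⟨.num C, .num 0, .num (-C), .left⟩
  | 5 => ⟨.num (-C), .num (-x1), .num C, .left⟩
  | 6 => ⟨.num C, .num x1, .num (-C), .left⟩
  | 7 => ⟨.num (-C), .num 0, .num (-C), .left⟩
  | 8 => ⟨.num (-C), .num (-x2), .num C, .left⟩
  | 9 => ⟨.num C, .num x2, .num (-C), .left⟩
  | 10 => ⟨.num (-C), .num 0, .num (-C), .left⟩
  | _ => ⟨.num (-C), .num 0, .num 0, .left⟩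


lemma perm_map (π : Fin 12 → Fin 12)
    (hπ : (Finset.univ.val.map π : Multiset (Fin 12)) = Finset.univ.val)
    (g : Fin 12 → Tile) :
    (Finset.univ.val.map (fun t => g (π t)) : Multiset Tile) = Finset.univ.val.map g := by
  conv_rhs => rw [← hπ]
  rw [Multiset.map_map]
  rfl

lemma pin_top0 (x0 x1 x2 C : ℤ) (h0 : 1 ≤ x0) (h01 : x0 < x1) (h12 : x1 < x2) (h2C : x2 < C)
    {a : Tile} (hmem : ∃ s : Fin 12, a = clauseTile C x0 x1 x2 (s : ℕ))
    (h : a.top = .num 0) : a = clauseTile C x0 x1 x2 0 := by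
  obtain ⟨s, rfl⟩ := hmem
  fin_cases s <;>
    first
      | rfl
      | (exfalso; simp [clauseTile] at h; all_goals omega)

lemma pin_bot0 (x0 x1 x2 C : ℤ) (h0 : 1 ≤ x0) (h01 : x0 < x1) (h12 : x1 < x2) (h2C : x2 < C)
    {a : Tile} (hmem : ∃ s : Fin 12, a = clauseTile C x0 x1 x2 (s : ℕ))
    (h : a.bottom = .num 0) : a = clauseTile C x0 x1 x2 11 := by
  obtain ⟨s, rfl⟩ := hmem
  fin_cases s <;>
    first
      | rfl
      | (exfalso; simp [clauseTile] at h; all_goals omega)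

lemma pin_r2 (x0 x1 x2 C : ℤ) (h0 : 1 ≤ x0) (h01 : x0 < x1) (h12 : x1 < x2) (h2C : x2 < C)
    {a : Tile} (hmem : ∃ s : Fin 12, a = clauseTile C x0 x1 x2 (s : ℕ))
    (h : a.right = .num x0) : a = clauseTile C x0 x1 x2 2 := by
  obtain ⟨s, rfl⟩ := hmem
  fin_cases s <;>
    first
      | rfl
      | (exfalso; simp [clauseTile] at h; all_goals omega)

lemma pin_r3 (x0 x1 x2 C : ℤ) (h0 : 1 ≤ x0) (h01 : x0 < x1) (h12 : x1 < x2) (h2C : x2 < C)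
    {a : Tile} (hmem : ∃ s : Fin 12, a = clauseTile C x0 x1 x2 (s : ℕ))
    (h : a.right = .num (-x0)) : a = clauseTile C x0 x1 x2 3 := by
  obtain ⟨s, rfl⟩ := hmem
  fin_cases s <;>
    first
      | rfl
      | (exfalso; simp [clauseTile] at h; all_goals omega)

lemma pin_r6 (x0 x1 x2 C : ℤ) (h0 : 1 ≤ x0) (h01 : x0 < x1) (h12 : x1 < x2) (h2C : x2 < C)
    {a : Tile} (hmem : ∃ s : Fin 12, a = clauseTile C x0 x1 x2 (s : ℕ))
    (h : a.right = .num x1) : a = clauseTile C x0 x1 x2 6 := by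
  obtain ⟨s, rfl⟩ := hmem
  fin_cases s <;>
    first
      | rfl
      | (exfalso; simp [clauseTile] at h; all_goals omega)

lemma pin_r5 (x0 x1 x2 C : ℤ) (h0 : 1 ≤ x0) (h01 : x0 < x1) (h12 : x1 < x2) (h2C : x2 < C)
    {a : Tile} (hmem : ∃ s : Fin 12, a = clauseTile C x0 x1 x2 (s : ℕ))
    (h : a.right = .num (-x1)) : a = clauseTile C x0 x1 x2 5 := by
  obtain ⟨s, rfl⟩ := hmem
  fin_cases s <;>
    first
      | rfl
      | (exfalso; simp [clauseTile] at h; all_goals omega)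

lemma pin_r9 (x0 x1 x2 C : ℤ) (h0 : 1 ≤ x0) (h01 : x0 < x1) (h12 : x1 < x2) (h2C : x2 < C)
    {a : Tile} (hmem : ∃ s : Fin 12, a = clauseTile C x0 x1 x2 (s : ℕ))
    (h : a.right = .num x2) : a = clauseTile C x0 x1 x2 9 := by
  obtain ⟨s, rfl⟩ := hmem
  fin_cases s <;>
    first
      | rfl
      | (exfalso; simp [clauseTile] at h; all_goals omega)

lemma pin_r8 (x0 x1 x2 C : ℤ) (h0 : 1 ≤ x0) (h01 : x0 < x1) (h12 : x1 < x2) (h2C : x2 < C)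
    {a : Tile} (hmem : ∃ s : Fin 12, a = clauseTile C x0 x1 x2 (s : ℕ))
    (h : a.right = .num (-x2)) : a = clauseTile C x0 x1 x2 8 := by
  obtain ⟨s, rfl⟩ := hmem
  fin_cases s <;>
    first
      | rfl
      | (exfalso; simp [clauseTile] at h; all_goals omega)

lemma pin_up (x0 x1 x2 C : ℤ) (h0 : 1 ≤ x0) (h01 : x0 < x1) (h12 : x1 < x2) (h2C : x2 < C)
    {a : Tile} (hmem : ∃ s : Fin 12, a = clauseTile C x0 x1 x2 (s : ℕ))
    (hr : a.right = .num 0) (ht : a.top = .num (-C)) (hb : a.bottom = .num C) : a = clauseTile C x0 x1 x2 1 := by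
  obtain ⟨s, rfl⟩ := hmem
  fin_cases s <;>
    first
      | rfl
      | (exfalso; simp [clauseTile] at hr ht hb; all_goals omega)

lemma pin_flat (x0 x1 x2 C : ℤ) (h0 : 1 ≤ x0) (h01 : x0 < x1) (h12 : x1 < x2) (h2C : x2 < C)
    {a : Tile} (hmem : ∃ s : Fin 12, a = clauseTile C x0 x1 x2 (s : ℕ))
    (hr : a.right = .num 0) (ht : a.top = .num (-C)) (hb : a.bottom = .num (-C)) : a = clauseTile C x0 x1 x2 7 := by
  obtain ⟨s, rfl⟩ := hmem
  fin_cases s <;>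
    first
      | rfl
      | (exfalso; simp [clauseTile] at hr ht hb; all_goals omega)

lemma pin_none (x0 x1 x2 C : ℤ) (h0 : 1 ≤ x0) (h01 : x0 < x1) (h12 : x1 < x2) (h2C : x2 < C)
    {a : Tile} (hmem : ∃ s : Fin 12, a = clauseTile C x0 x1 x2 (s : ℕ))
    (hr : a.right = .num 0) (ht : a.top = .num C) (hb : a.bottom = .num C) : False := by
  obtain ⟨s, rfl⟩ := hmem
  fin_cases s <;> (simp [clauseTile] at hr ht hb; all_goals omega)

lemma count_key (g : Fin 12 → Tile) (a : Tile) :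
    Multiset.count a (Finset.univ.val.map g) = (Finset.univ.filter fun t => a = g t).card := by
  rw [Multiset.count_map]
  rfl

/-- **The clause component works iff exactly one incoming signal is true.**
Let `0 < x0 < x1 < x2 < C` be the labels of the three variables of a clause
with unique clause label `C`, and let `σ s` be the polarity of the incoming
horizontal wire signal for slot `s` (`true` = `(x, -x)`, i.e. `x` above and
`-x` below; `false` = `(-x, x)`).  Then the 12 clause tiles admit a vertical
arrangement `f` with all vertical adjacencies matching, top and bottom edges
labelled `0`, blank right edges labelled `0`, and right edges at the fixed
incoming-wire rows `{2,3}, {5,6}, {8,9}` matching the incoming signals, if and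
only if exactly one of the three signals is true. -/
theorem clause_component_iff_exactly_one (x0 x1 x2 C : ℤ)
    (h0 : 1 ≤ x0) (h01 : x0 < x1) (h12 : x1 < x2) (h2C : x2 < C)
    (σ : Fin 3 → Bool) :
    (∃ f : Fin 12 → Tile,
      (Finset.univ.val.map f : Multiset Tile) =
        Finset.univ.val.map (fun t : Fin 12 => clauseTile C x0 x1 x2 (t : ℕ)) ∧
      (∀ t t' : Fin 12, (t' : ℕ) = (t : ℕ) + 1 → (f t).bottom = (f t').top) ∧
      (f 0).top = .num 0 ∧ (f 11).bottom = .num 0 ∧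
      (∀ t ∈ ({0, 1, 4, 7, 10, 11} : Finset (Fin 12)), (f t).right = .num 0) ∧
      (f 2).right = .num (if σ 0 then x0 else -x0) ∧
      (f 3).right = .num (if σ 0 then -x0 else x0) ∧
      (f 5).right = .num (if σ 1 then x1 else -x1) ∧
      (f 6).right = .num (if σ 1 then -x1 else x1) ∧
      (f 8).right = .num (if σ 2 then x2 else -x2) ∧
      (f 9).right = .num (if σ 2 then -x2 else x2)) ↔
    (Finset.univ.filter fun s : Fin 3 => σ s = true).card = 1 := by
  constructor
  · rintro ⟨f, hmap, hadj, htop, hbot, hzero, hr2, hr3, hr5, hr6, hr8, hr9⟩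
    have hmem : ∀ t : Fin 12, ∃ s : Fin 12, f t = clauseTile C x0 x1 x2 (s : ℕ) := by
      intro t
      have h1 : f t ∈ (Finset.univ.val.map f : Multiset Tile) :=
        Multiset.mem_map.2 ⟨t, by simp, rfl⟩
      rw [hmap] at h1
      obtain ⟨s, _, hs⟩ := Multiset.mem_map.1 h1
      exact ⟨s, hs.symm⟩
    have a01 : (f 0).bottom = (f 1).top := hadj 0 1 (by rfl)
    have a12 : (f 1).bottom = (f 2).top := hadj 1 2 (by rfl)
    have a34 : (f 3).bottom = (f 4).top := hadj 3 4 (by rfl)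
    have a45 : (f 4).bottom = (f 5).top := hadj 4 5 (by rfl)
    have a67 : (f 6).bottom = (f 7).top := hadj 6 7 (by rfl)
    have a78 : (f 7).bottom = (f 8).top := hadj 7 8 (by rfl)
    have a9X : (f 9).bottom = (f 10).top := hadj 9 10 (by rfl)
    have aXE : (f 10).bottom = (f 11).top := hadj 10 11 (by rfl)
    have hz1 : (f 1).right = Lab.num 0 := hzero 1 (by decide)
    have hz4 : (f 4).right = Lab.num 0 := hzero 4 (by decide)
    have hz7 : (f 7).right = Lab.num 0 := hzero 7 (by decide)
    have hz10 : (f 10).right = Lab.num 0 := hzero 10 (by decide)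
    have hf0 := pin_top0 x0 x1 x2 C h0 h01 h12 h2C (hmem 0) htop
    have hf11 := pin_bot0 x0 x1 x2 C h0 h01 h12 h2C (hmem 11) hbot
    cases hσ0 : σ 0 <;> cases hσ1 : σ 1 <;> cases hσ2 : σ 2 <;>
      simp only [hσ0, hσ1, hσ2, if_true, if_false, Bool.false_eq_true] at hr2 hr3 hr5 hr6 hr8 hr9
    · exfalso
      have hf2 := pin_r3 x0 x1 x2 C h0 h01 h12 h2C (hmem 2) hr2
      have hf3 := pin_r2 x0 x1 x2 C h0 h01 h12 h2C (hmem 3) hr3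
      have hf5 := pin_r5 x0 x1 x2 C h0 h01 h12 h2C (hmem 5) hr5
      have hf6 := pin_r6 x0 x1 x2 C h0 h01 h12 h2C (hmem 6) hr6
      have hf8 := pin_r8 x0 x1 x2 C h0 h01 h12 h2C (hmem 8) hr8
      have hf9 := pin_r9 x0 x1 x2 C h0 h01 h12 h2C (hmem 9) hr9
      have ht1 : (f 1).top = Lab.num (-C) := by rw [← a01, hf0]; rfl
      have hb1 : (f 1).bottom = Lab.num (-C) := by rw [a12, hf2]; rfl
      have hf1 := pin_flat x0 x1 x2 C h0 h01 h12 h2C (hmem 1) hz1 ht1 hb1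
      have ht4 : (f 4).top = Lab.num (-C) := by rw [← a34, hf3]; rfl
      have hb4 : (f 4).bottom = Lab.num (-C) := by rw [a45, hf5]; rfl
      have hf4 := pin_flat x0 x1 x2 C h0 h01 h12 h2C (hmem 4) hz4 ht4 hb4
      have ht7 : (f 7).top = Lab.num (-C) := by rw [← a67, hf6]; rfl
      have hb7 : (f 7).bottom = Lab.num (-C) := by rw [a78, hf8]; rfl
      have hf7 := pin_flat x0 x1 x2 C h0 h01 h12 h2C (hmem 7) hz7 ht7 hb7
      have ht10 : (f 10).top = Lab.num (-C) := by rw [← a9X, hf9]; rfl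
      have hb10 : (f 10).bottom = Lab.num (-C) := by rw [aXE, hf11]; rfl
      have hf10 := pin_flat x0 x1 x2 C h0 h01 h12 h2C (hmem 10) hz10 ht10 hb10
      have hc := congrArg (Multiset.count (clauseTile C x0 x1 x2 7)) hmap
      rw [count_key, count_key] at hc
      have hL : 4 ≤ (Finset.univ.filter fun t : Fin 12 =>
          clauseTile C x0 x1 x2 7 = f t).card := by
        have hsub : ({1, 4, 7, 10} : Finset (Fin 12)) ⊆
            (Finset.univ.filter fun t : Fin 12 => clauseTile C x0 x1 x2 7 = f t) := by
          intro t ht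
          fin_cases ht <;> simp only [Finset.mem_filter, Finset.mem_univ, true_and] <;>
            first
              | exact hf1.symm
              | exact hf4.symm
              | exact hf7.symm
              | exact hf10.symm
        calc (4 : ℕ) = ({1, 4, 7, 10} : Finset (Fin 12)).card := by decide
          _ ≤ _ := Finset.card_le_card hsub
      have hR : (Finset.univ.filter fun t : Fin 12 =>
          clauseTile C x0 x1 x2 7 = clauseTile C x0 x1 x2 (t : ℕ)).card = 2 := by
        have he : (Finset.univ.filter fun t : Fin 12 =>
            clauseTile C x0 x1 x2 7 = clauseTile C x0 x1 x2 (t : ℕ)) = {7, 10} := by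
          ext t
          fin_cases t <;> simp [clauseTile] <;> omega
        rw [he]
        rfl
      omega
    · have he : (Finset.univ.filter fun s : Fin 3 => σ s = true) = {2} := by
        ext s
        fin_cases s <;> simp [hσ0, hσ1, hσ2]
      rw [he]
      rfl
    · have he : (Finset.univ.filter fun s : Fin 3 => σ s = true) = {1} := by
        ext s
        fin_cases s <;> simp [hσ0, hσ1, hσ2]
      rw [he]
      rfl
    · exfalso
      have hf6 := pin_r5 x0 x1 x2 C h0 h01 h12 h2C (hmem 6) hr6
      have hf8 := pin_r9 x0 x1 x2 C h0 h01 h12 h2C (hmem 8) hr8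
      have ht7 : (f 7).top = Lab.num C := by rw [← a67, hf6]; rfl
      have hb7 : (f 7).bottom = Lab.num C := by rw [a78, hf8]; rfl
      exact pin_none x0 x1 x2 C h0 h01 h12 h2C (hmem 7) hz7 ht7 hb7
    · have he : (Finset.univ.filter fun s : Fin 3 => σ s = true) = {0} := by
        ext s
        fin_cases s <;> simp [hσ0, hσ1, hσ2]
      rw [he]
      rfl
    · exfalso
      have hf2 := pin_r2 x0 x1 x2 C h0 h01 h12 h2C (hmem 2) hr2
      have hf6 := pin_r6 x0 x1 x2 C h0 h01 h12 h2C (hmem 6) hr6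
      have hf8 := pin_r9 x0 x1 x2 C h0 h01 h12 h2C (hmem 8) hr8
      have ht1 : (f 1).top = Lab.num (-C) := by rw [← a01, hf0]; rfl
      have hb1 : (f 1).bottom = Lab.num C := by rw [a12, hf2]; rfl
      have hf1 := pin_up x0 x1 x2 C h0 h01 h12 h2C (hmem 1) hz1 ht1 hb1
      have ht7 : (f 7).top = Lab.num (-C) := by rw [← a67, hf6]; rfl
      have hb7 : (f 7).bottom = Lab.num C := by rw [a78, hf8]; rfl
      have hf7 := pin_up x0 x1 x2 C h0 h01 h12 h2C (hmem 7) hz7 ht7 hb7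
      have hf4 : True := trivial
      have hf10 : True := trivial
      have hc := congrArg (Multiset.count (clauseTile C x0 x1 x2 1)) hmap
      rw [count_key, count_key] at hc
      have hL : 2 ≤ (Finset.univ.filter fun t : Fin 12 =>
          clauseTile C x0 x1 x2 1 = f t).card := by
        have hsub : ({1, 7} : Finset (Fin 12)) ⊆
            (Finset.univ.filter fun t : Fin 12 => clauseTile C x0 x1 x2 1 = f t) := by
          intro t ht
          fin_cases ht <;> simp only [Finset.mem_filter, Finset.mem_univ, true_and] <;>
            first
              | exact hf1.symm
              | exact hf4.symm
              | exact hf7.symm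
              | exact hf10.symm
        calc (2 : ℕ) = ({1, 7} : Finset (Fin 12)).card := by decide
          _ ≤ _ := Finset.card_le_card hsub
      have hR : (Finset.univ.filter fun t : Fin 12 =>
          clauseTile C x0 x1 x2 1 = clauseTile C x0 x1 x2 (t : ℕ)).card = 1 := by
        have he : (Finset.univ.filter fun t : Fin 12 =>
            clauseTile C x0 x1 x2 1 = clauseTile C x0 x1 x2 (t : ℕ)) = {1} := by
          ext t
          fin_cases t <;> simp [clauseTile] <;> omega
        rw [he]
        rfl
      omega
    · exfalso
      have hf3 := pin_r3 x0 x1 x2 C h0 h01 h12 h2C (hmem 3) hr3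
      have hf5 := pin_r6 x0 x1 x2 C h0 h01 h12 h2C (hmem 5) hr5
      have ht4 : (f 4).top = Lab.num C := by rw [← a34, hf3]; rfl
      have hb4 : (f 4).bottom = Lab.num C := by rw [a45, hf5]; rfl
      exact pin_none x0 x1 x2 C h0 h01 h12 h2C (hmem 4) hz4 ht4 hb4
    · exfalso
      have hf3 := pin_r3 x0 x1 x2 C h0 h01 h12 h2C (hmem 3) hr3
      have hf5 := pin_r6 x0 x1 x2 C h0 h01 h12 h2C (hmem 5) hr5
      have ht4 : (f 4).top = Lab.num C := by rw [← a34, hf3]; rfl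
      have hb4 : (f 4).bottom = Lab.num C := by rw [a45, hf5]; rfl
      exact pin_none x0 x1 x2 C h0 h01 h12 h2C (hmem 4) hz4 ht4 hb4
  · intro hcard
    cases hσ0 : σ 0 <;> cases hσ1 : σ 1 <;> cases hσ2 : σ 2
    · exfalso
      have he : (Finset.univ.filter fun s : Fin 3 => σ s = true) = (∅ : Finset (Fin 3)) := by
        ext s
        fin_cases s <;> simp [hσ0, hσ1, hσ2]
      rw [he] at hcard
      exact absurd hcard (by decide)
    · refine ⟨fun t : Fin 12 => clauseTile C x0 x1 x2 (((![0, 7, 3, 2, 10, 5, 6, 1, 9, 8, 4, 11] : Fin 12 → Fin 12)) t : ℕ), perm_map (![0, 7, 3, 2, 10, 5, 6, 1, 9, 8, 4, 11] : Fin 12 → Fin 12) (by decide) (fun s : Fin 12 => clauseTile C x0 x1 x2 (s : ℕ)), ?_, rfl, rfl, ?_, ?_, ?_, ?_, ?_, ?_, ?_⟩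
      · intro t t' h
        obtain ⟨tv, htv⟩ := t
        obtain ⟨t'v, ht'v⟩ := t'
        simp only [Fin.val_mk] at h
        subst h
        interval_cases tv <;> first | rfl | omega
      · intro t ht
        fin_cases ht <;> rfl
      all_goals
        simp only [hσ0, hσ1, hσ2]
      all_goals
        rfl
    · refine ⟨fun t : Fin 12 => clauseTile C x0 x1 x2 (((![0, 7, 3, 2, 1, 6, 5, 4, 8, 9, 10, 11] : Fin 12 → Fin 12)) t : ℕ), perm_map (![0, 7, 3, 2, 1, 6, 5, 4, 8, 9, 10, 11] : Fin 12 → Fin 12) (by decide) (fun s : Fin 12 => clauseTile C x0 x1 x2 (s : ℕ)), ?_, rfl, rfl, ?_, ?_, ?_, ?_, ?_, ?_, ?_⟩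
      · intro t t' h
        obtain ⟨tv, htv⟩ := t
        obtain ⟨t'v, ht'v⟩ := t'
        simp only [Fin.val_mk] at h
        subst h
        interval_cases tv <;> first | rfl | omega
      · intro t ht
        fin_cases ht <;> rfl
      all_goals
        simp only [hσ0, hσ1, hσ2]
      all_goals
        rfl
    · exfalso
      have he : (Finset.univ.filter fun s : Fin 3 => σ s = true) = ({1, 2} : Finset (Fin 3)) := by
        ext s
        fin_cases s <;> simp [hσ0, hσ1, hσ2]
      rw [he] at hcard
      exact absurd hcard (by decide)
    · refine ⟨fun t : Fin 12 => clauseTile C x0 x1 x2 (t : ℕ), rfl, ?_, rfl, rfl, ?_, ?_, ?_, ?_, ?_, ?_, ?_⟩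
      · intro t t' h
        obtain ⟨tv, htv⟩ := t
        obtain ⟨t'v, ht'v⟩ := t'
        simp only [Fin.val_mk] at h
        subst h
        interval_cases tv <;> first | rfl | omega
      · intro t ht
        fin_cases ht <;> rfl
      all_goals
        simp only [hσ0, hσ1, hσ2]
      all_goals
        rfl
    · exfalso
      have he : (Finset.univ.filter fun s : Fin 3 => σ s = true) = ({0, 2} : Finset (Fin 3)) := by
        ext s
        fin_cases s <;> simp [hσ0, hσ1, hσ2]
      rw [he] at hcard
      exact absurd hcard (by decide)
    · exfalso
      have he : (Finset.univ.filter fun s : Fin 3 => σ s = true) = ({0, 1} : Finset (Fin 3)) := by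
        ext s
        fin_cases s <;> simp [hσ0, hσ1, hσ2]
      rw [he] at hcard
      exact absurd hcard (by decide)
    · exfalso
      have he : (Finset.univ.filter fun s : Fin 3 => σ s = true) = ({0, 1, 2} : Finset (Fin 3)) := by
        ext s
        fin_cases s <;> simp [hσ0, hσ1, hσ2]
      rw [he] at hcard
      exact absurd hcard (by decide)
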